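/- arXiv:1709.05477 — 4 statements merged into one kernel-verified Lean document; each statement's English description precedes it below -/
import Mathlib

section
/- (Counting identity for α_L, equations (19)/(22)/(26)) Let L ≥ 1 and N ≥ 0 be integers, let m_1, …, m_L and μ be integers with 0 ≤ μ ≤ m_j ≤ N for every j. Then the number of L-tuples (U_1, …, U_L) of subsets of Fin N with |U_j| = m_j for every j and |⋂_{j=1}^{L} U_j| = μ equals C(N,μ) · Σ_{l=0}^{min_j(m_j−μ)} (−1)^l C(N−μ, l) ∏_{j=1}^{L} C(N−μ−l, m_j−μ−l), where C(a,b) denotes the binomial coefficient. -/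
open scoped Classical

def minOver {L : ℕ} (hL : 0 < L) (m : Fin L → ℕ) : ℕ :=
  Finset.univ.inf' ⟨⟨0, hL⟩, Finset.mem_univ _⟩ m

open Finset

/-!
Group the tuples by `S = ⋂ j, U j`: each of the `C(N, μ)` sets `S` of size `μ` contributes the
same number. For fixed `S`, inclusion–exclusion over the points outside `S` that could still lie
in every `U j` gives `∑_{T ⊆ Sᶜ} (-1)^|T| · #{U | S ∪ T ⊆ U j for all j}`, and that count
factorises as `∏ j, C(N - |S ∪ T|, m j - |S ∪ T|)`, or vanishes when `|S ∪ T| > m j` for some `j`.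
Grouping the `T` by `l = |T|`, the vanishing terms are exactly those with `l > min_j (m j - μ)`.
-/

section
variable {α β ι : Type*} [DecidableEq α]

theorem sum_powerset_neg_one_pow_mul_card_filter_subset (X : Finset β) (g : β → Finset α)
    (s : Finset α) :
    ∑ t ∈ s.powerset, (-1 : ℤ) ^ #t * #{x ∈ X | t ⊆ g x} = #{x ∈ X | Disjoint s (g x)} := by
  calc ∑ t ∈ s.powerset, (-1 : ℤ) ^ #t * #{x ∈ X | t ⊆ g x}
      = ∑ x ∈ X, ∑ t ∈ (s ∩ g x).powerset, (-1 : ℤ) ^ #t := by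
        simp_rw [card_filter, Nat.cast_sum, mul_sum, Nat.cast_ite, Nat.cast_one, Nat.cast_zero,
          mul_ite, mul_one, mul_zero]
        rw [sum_comm]
        refine sum_congr rfl fun x _ => ?_
        rw [← sum_filter]
        congr 1
        ext t
        simp only [mem_filter, mem_powerset, subset_inter_iff]
    _ = #{x ∈ X | Disjoint s (g x)} := by
        simp_rw [sum_powerset_neg_one_pow_card, ← disjoint_iff_inter_eq_empty]
        rw [sum_boole]

variable [Fintype α]

theorem card_filter_card_eq_add_and_subset (s : Finset α) (k : ℕ) :
    #{V : Finset α | #V = #s + k ∧ s ⊆ V} = (Fintype.card α - #s).choose k := by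
  rw [← card_compl, ← card_powersetCard]
  refine card_nbij' (· \ s) (s ∪ ·) (fun V hV => ?_) (fun W hW => ?_) (fun V hV => ?_)
    (fun W hW => ?_)
  all_goals simp only [mem_coe, mem_filter, mem_univ, true_and, mem_powersetCard,
    subset_compl_iff_disjoint_left] at *
  · exact ⟨disjoint_sdiff, by
      rw [card_sdiff_of_subset hV.2, hV.1, Nat.add_sub_cancel_left]⟩
  · exact ⟨by rw [card_union_of_disjoint hW.1, hW.2], subset_union_left⟩
  · exact union_sdiff_of_subset hV.2
  · exact union_sdiff_cancel_left hW.1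

theorem card_filter_card_eq_and_subset (s : Finset α) (k : ℕ) :
    #{V : Finset α | #V = k ∧ s ⊆ V} =
      if #s ≤ k then (Fintype.card α - #s).choose (k - #s) else 0 := by
  split_ifs with hk
  · simpa [Nat.add_sub_cancel' hk] using card_filter_card_eq_add_and_subset s (k - #s)
  · refine card_eq_zero.2 (filter_eq_empty_iff.2 fun V _ hV => hk ?_)
    exact hV.1 ▸ card_le_card hV.2

variable [Fintype ι] [DecidableEq ι]

theorem card_filter_forall_card_eq_and_subset (m : ι → ℕ) (s : Finset α) :
    #{U : ι → Finset α | ∀ j, #(U j) = m j ∧ s ⊆ U j} =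
      ∏ j, #{V : Finset α | #V = m j ∧ s ⊆ V} := by
  rw [← Fintype.card_piFinset]
  congr 1
  ext U
  simp [Fintype.mem_piFinset]

theorem card_filter_inf_eq (m : ι → ℕ) (S : Finset α) :
    (#{U : ι → Finset α | (∀ j, #(U j) = m j) ∧ univ.inf U = S} : ℤ) =
      ∑ T ∈ Sᶜ.powerset,
        (-1 : ℤ) ^ #T * #{U : ι → Finset α | ∀ j, #(U j) = m j ∧ S ∪ T ⊆ U j} := by
  set X : Finset (ι → Finset α) := {U | ∀ j, #(U j) = m j ∧ S ⊆ U j}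
  have h_subset (T : Finset α) :
      ({U | ∀ j, #(U j) = m j ∧ S ∪ T ⊆ U j} : Finset (ι → Finset α)) =
        {U ∈ X | T ⊆ univ.inf U} := by
    refine Finset.ext fun U => ?_
    simp only [X, mem_filter, mem_univ, true_and, union_subset_iff, Finset.le_inf_iff, forall_and]
    tauto
  have h_exact : ({U | (∀ j, #(U j) = m j) ∧ univ.inf U = S} : Finset (ι → Finset α)) =
      {U ∈ X | Disjoint Sᶜ (univ.inf U)} := by
    refine Finset.ext fun U => ?_
    have h_inf : (∀ j, S ⊆ U j) ↔ S ⊆ univ.inf U := by simp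
    simp only [X, mem_filter, mem_univ, true_and, disjoint_compl_left_iff, forall_and, h_inf,
      and_assoc, ← subset_antisymm_iff, eq_comm]
  simp_rw [h_subset, h_exact]
  exact (sum_powerset_neg_one_pow_mul_card_filter_subset X (univ.inf) Sᶜ).symm

theorem card_filter_inf_eq_sum_range (m : ι → ℕ) (S : Finset α) (hS : ∀ j, #S ≤ m j) :
    (#{U : ι → Finset α | (∀ j, #(U j) = m j) ∧ univ.inf U = S} : ℤ) =
      ∑ l ∈ range (Fintype.card α - #S + 1), ((Fintype.card α - #S).choose l : ℤ) *
        ((-1) ^ l * if ∀ j, l ≤ m j - #S then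
          ∏ j, ((Fintype.card α - #S - l).choose (m j - #S - l) : ℤ) else 0) := by
  rw [card_filter_inf_eq, ← card_compl]
  simp_rw [← nsmul_eq_mul]
  rw [← sum_powerset_apply_card]
  refine sum_congr rfl fun T hT => ?_
  have h_card : #(S ∪ T) = #S + #T :=
    card_union_of_disjoint (subset_compl_iff_disjoint_left.1 (mem_powerset.1 hT))
  rw [card_filter_forall_card_eq_and_subset, Nat.cast_prod, ← Fintype.prod_ite_zero]
  simp_rw [card_filter_card_eq_and_subset, h_card, card_compl]
  congr 1
  refine Fintype.prod_congr _ _ fun j => ?_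
  have := hS j
  split_ifs <;> first | omega | simp [Nat.sub_sub]

theorem card_filter_card_inf_eq (m : ι → ℕ) (μ : ℕ) (hμ : ∀ j, μ ≤ m j) :
    (#{U : ι → Finset α | (∀ j, #(U j) = m j) ∧ #(univ.inf U) = μ} : ℤ) =
      (Fintype.card α).choose μ * ∑ l ∈ range (Fintype.card α - μ + 1),
        ((Fintype.card α - μ).choose l : ℤ) * ((-1) ^ l * if ∀ j, l ≤ m j - μ then
          ∏ j, ((Fintype.card α - μ - l).choose (m j - μ - l) : ℤ) else 0) := by
  have h_fiber : #{U : ι → Finset α | (∀ j, #(U j) = m j) ∧ #(univ.inf U) = μ} =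
      ∑ S ∈ powersetCard μ univ, #{U : ι → Finset α | (∀ j, #(U j) = m j) ∧ univ.inf U = S} := by
    rw [card_eq_sum_card_fiberwise (f := fun U => univ.inf U) (t := powersetCard μ univ)
      fun U hU => mem_powersetCard.2 ⟨subset_univ _, (mem_filter.1 hU).2.2⟩]
    refine sum_congr rfl fun S hS => congrArg card (Finset.ext fun U => ?_)
    simp only [mem_filter, mem_univ, true_and, and_congr_left_iff, and_iff_left_iff_imp]
    rintro rfl -
    exact (mem_powersetCard.1 hS).2
  rw [h_fiber, Nat.cast_sum, ← card_univ, ← card_powersetCard, ← nsmul_eq_mul, ← sum_const]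
  refine sum_congr rfl fun S hS => ?_
  obtain rfl := (mem_powersetCard.1 hS).2
  exact card_filter_inf_eq_sum_range m S hμ

end

theorem sum_range_choose_mul_ite_le {R : Type*} [Semiring R] (n b : ℕ) (f : ℕ → R) :
    ∑ l ∈ range (n + 1), (if l ≤ b then (n.choose l : R) * f l else 0) =
      ∑ l ∈ range (b + 1), (n.choose l : R) * f l := by
  rw [← sum_filter]
  refine sum_subset (fun l hl => ?_) (fun l hl hl' => ?_)
  · simp only [mem_filter, mem_range] at hl ⊢
    omega
  · simp only [mem_filter, mem_range, not_and, not_le] at hl hl'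
    rw [Nat.choose_eq_zero_of_lt (by omega), Nat.cast_zero, zero_mul]

theorem stmt8_general (N L : ℕ) (hL : 0 < L) (m : Fin L → ℕ) (μ : ℕ)
    (hμm : ∀ j, μ ≤ m j) :
    ((Finset.univ.filter (fun U : Fin L → Finset (Fin N) =>
          (∀ j, (U j).card = m j) ∧ (Finset.univ.inf U).card = μ)).card : ℤ)
      = (N.choose μ : ℤ) *
          ∑ l ∈ Finset.range (minOver hL (fun j => m j - μ) + 1),
            (-1 : ℤ) ^ l * ((N - μ).choose l : ℤ) *
              ∏ j, ((N - μ - l).choose (m j - μ - l) : ℤ) := by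
  have h_count := card_filter_card_inf_eq (α := Fin N) m μ hμm
  -- the general lemma decides `∀ j` through `Fintype`, the statement through `Fin L`
  rw [filter_congr_decidable] at h_count
  have h_min (l : ℕ) : (∀ j, l ≤ m j - μ) ↔ l ≤ minOver hL (fun j => m j - μ) :=
    ⟨fun h => le_inf' _ _ fun j _ => h j, fun h j => h.trans (inf'_le _ (mem_univ j))⟩
  simp_rw [h_count, Fintype.card_fin, h_min, mul_ite, mul_zero, sum_range_choose_mul_ite_le,
    ← mul_assoc, mul_comm ((N - μ).choose _ : ℤ)]

/-- counting identity for `α_L`: the number of `L`-tuples `(U 1, …, U L)` of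
subsets of `Fin N` with `|U j| = m j` for every `j` and `|⋂ j, U j| = μ` equals
`C(N,μ) Σ_{l=0}^{min_j(m_j-μ)} (-1)^l C(N-μ,l) ∏_j C(N-μ-l, m_j-μ-l)`. -/
theorem stmt8 (N L : ℕ) (hL : 0 < L) (m : Fin L → ℕ) (μ : ℕ)
    (hμm : ∀ j, μ ≤ m j) (hmN : ∀ j, m j ≤ N) :
    ((Finset.univ.filter (fun U : Fin L → Finset (Fin N) =>
          (∀ j, (U j).card = m j) ∧ (Finset.univ.inf U).card = μ)).card : ℤ)
      = (N.choose μ : ℤ) *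
          ∑ l ∈ Finset.range (minOver hL (fun j => m j - μ) + 1),
            (-1 : ℤ) ^ l * ((N - μ).choose l : ℤ) *
              ∏ j, ((N - μ - l).choose (m j - μ - l) : ℤ) :=
  stmt8_general N L hL m μ hμm
end

section
/- (Remark 2: binomial identity relating the two-user product of binomials to α_2) Let N, m_1, m_2, μ be integers with 0 ≤ μ ≤ m_1 ≤ m_2 ≤ N. Then C(N,μ) C(N−μ, m_1−μ) C(N−m_1, m_2−μ) = C(N,μ) · Σ_{l=0}^{m_1−μ} (−1)^l C(N−μ, l) C(N−μ−l, m_1−μ−l) C(N−μ−l, m_2−μ−l), i.e., C(N−μ, m_1−μ) C(N−m_1, m_2−μ) = Σ_{l=0}^{m_1−μ} (−1)^l C(N−μ, l) C(N−μ−l, m_1−μ−l) C(N−μ−l, m_2−μ−l). -/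
/-!
Write `n = N - μ`, `a = m₁ - μ`, `b = m₂ - μ`. Since `C(n,l) C(n-l,a-l) = C(n,a) C(a,l)`,
the sum is `C(n,a) Σ_l (-1)^l C(a,l) C(n-l,b-l)`, and this alternating sum is `C(n-a,b)`:
it is the coefficient of `X^b` in `(X+1)^(n-a) = ((X+1) - X)^a (X+1)^(n-a)` once
`((X+1) - X)^a` is expanded.
-/

open Polynomial Finset

theorem sum_range_neg_one_pow_mul_choose_mul_choose_sub {n a b : ℕ} (hab : a ≤ b)
    (han : a ≤ n) :
    ∑ l ∈ range (a + 1), (-1 : ℤ) ^ l * a.choose l * (n - l).choose (b - l)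
      = (n - a).choose b := by
  have hpoly : ((X : ℤ[X]) + 1) ^ (n - a) =
      ∑ l ∈ range (a + 1), C ((-1 : ℤ) ^ l * a.choose l) * (X ^ l * (X + 1) ^ (n - l)) := by
    calc ((X : ℤ[X]) + 1) ^ (n - a) = (-X + (X + 1)) ^ a * (X + 1) ^ (n - a) := by ring
      _ = _ := by
        rw [add_pow, sum_mul]
        refine sum_congr rfl fun l hl => ?_
        have hla : l ≤ a := Nat.lt_succ_iff.mp (mem_range.mp hl)
        rw [show n - l = (a - l) + (n - a) by omega, pow_add, neg_pow]
        simp only [map_mul, map_pow, map_neg, map_one, map_natCast]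
        ring
  have hcoeff := congrArg (coeff · b) hpoly
  simp only [coeff_X_add_one_pow, finsetSum_coeff, coeff_C_mul, coeff_X_pow_mul'] at hcoeff
  rw [hcoeff]
  refine sum_congr rfl fun l hl => ?_
  have hlb : l ≤ b := (Nat.lt_succ_iff.mp (mem_range.mp hl)).trans hab
  rw [if_pos hlb]

theorem choose_mul_choose_sub_eq_sum_neg_one_pow {n a b : ℕ} (hab : a ≤ b) :
    (n.choose a : ℤ) * (n - a).choose b
      = ∑ l ∈ range (a + 1),
          (-1 : ℤ) ^ l * n.choose l * (n - l).choose (a - l) * (n - l).choose (b - l) := by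
  have hfactor : ∀ l ∈ range (a + 1),
      (-1 : ℤ) ^ l * n.choose l * (n - l).choose (a - l) * (n - l).choose (b - l)
        = n.choose a * ((-1 : ℤ) ^ l * a.choose l * (n - l).choose (b - l)) := by
    intro l hl
    have hchoose : (n.choose l : ℤ) * (n - l).choose (a - l) = n.choose a * a.choose l := by
      exact_mod_cast (Nat.choose_mul (Nat.lt_succ_iff.mp (mem_range.mp hl))).symm
    linear_combination (-1 : ℤ) ^ l * (n - l).choose (b - l) * hchoose
  rw [sum_congr rfl hfactor, ← mul_sum]
  rcases le_or_gt a n with han | hna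
  · rw [sum_range_neg_one_pow_mul_choose_mul_choose_sub hab han]
  · simp [Nat.choose_eq_zero_of_lt hna]

theorem stmt10_general (N m₁ m₂ μ : ℕ) (h1 : μ ≤ m₁) (h2 : m₁ ≤ m₂) :
    ((N.choose μ : ℤ) * ((N - μ).choose (m₁ - μ) : ℤ) * ((N - m₁).choose (m₂ - μ) : ℤ)
        = (N.choose μ : ℤ) *
            ∑ l ∈ Finset.range (m₁ - μ + 1),
              (-1 : ℤ) ^ l * ((N - μ).choose l : ℤ) * ((N - μ - l).choose (m₁ - μ - l) : ℤ)
                * ((N - μ - l).choose (m₂ - μ - l) : ℤ)) ∧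
    (((N - μ).choose (m₁ - μ) : ℤ) * ((N - m₁).choose (m₂ - μ) : ℤ)
        = ∑ l ∈ Finset.range (m₁ - μ + 1),
            (-1 : ℤ) ^ l * ((N - μ).choose l : ℤ) * ((N - μ - l).choose (m₁ - μ - l) : ℤ)
              * ((N - μ - l).choose (m₂ - μ - l) : ℤ)) := by
  have hreduced :=
    choose_mul_choose_sub_eq_sum_neg_one_pow (n := N - μ) (Nat.sub_le_sub_right h2 μ)
  rw [show N - μ - (m₁ - μ) = N - m₁ by omega] at hreduced
  exact ⟨by rw [mul_assoc, hreduced], hreduced⟩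

/-- Remark 2, binomial identity: for `0 ≤ μ ≤ m₁ ≤ m₂ ≤ N`,
`C(N,μ) C(N-μ, m₁-μ) C(N-m₁, m₂-μ)
  = C(N,μ) Σ_{l=0}^{m₁-μ} (-1)^l C(N-μ,l) C(N-μ-l, m₁-μ-l) C(N-μ-l, m₂-μ-l)`,
i.e. `C(N-μ, m₁-μ) C(N-m₁, m₂-μ)
  = Σ_{l=0}^{m₁-μ} (-1)^l C(N-μ,l) C(N-μ-l, m₁-μ-l) C(N-μ-l, m₂-μ-l)`. -/
theorem stmt10 (N m₁ m₂ μ : ℕ) (h1 : μ ≤ m₁) (h2 : m₁ ≤ m₂) (h3 : m₂ ≤ N) :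
    ((N.choose μ : ℤ) * ((N - μ).choose (m₁ - μ) : ℤ) * ((N - m₁).choose (m₂ - μ) : ℤ)
        = (N.choose μ : ℤ) *
            ∑ l ∈ Finset.range (m₁ - μ + 1),
              (-1 : ℤ) ^ l * ((N - μ).choose l : ℤ) * ((N - μ - l).choose (m₁ - μ - l) : ℤ)
                * ((N - μ - l).choose (m₂ - μ - l) : ℤ)) ∧
    (((N - μ).choose (m₁ - μ) : ℤ) * ((N - m₁).choose (m₂ - μ) : ℤ)
        = ∑ l ∈ Finset.range (m₁ - μ + 1),
            (-1 : ℤ) ^ l * ((N - μ).choose l : ℤ) * ((N - μ - l).choose (m₁ - μ - l) : ℤ)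
              * ((N - μ - l).choose (m₂ - μ - l) : ℤ)) :=
  stmt10_general N m₁ m₂ μ h1 h2
end

section
/- (Exact point-to-point probability for non-systematic RLNC, equation (2)) Let N ≥ K ≥ 1 be integers and ε ∈ [0,1]. In the non-systematic RLNC broadcast model with a single user (L = 1) whose per-row erasure probability is ε, the probability that the user's coding matrix has rank K equals exactly Σ_{m=K}^{N} C(N,m) (1−ε)^m ε^{N−m} P(m,K), where C(N,m) is the binomial coefficient. -/
open scoped Classical

/-- `Pfull q m K` is `P(m,K) = ∏_{i=0}^{K-1} (1 - q^{i-m})`, the probability that a uniformly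
random `m × K` matrix over a field with `q` elements has rank `K`. -/
noncomputable def Pfull (q m K : ℕ) : ℝ :=
  ∏ i ∈ Finset.range K, (1 - (q : ℝ) ^ ((i : ℤ) - (m : ℤ)))

/-- `Prank q μ K i` is `P^(i)(μ,K) = q^{-(μ-i)(K-i)} ∏_{l=0}^{i-1}
(1-q^{l-μ})(1-q^{l-K})/(1-q^{l-i})`, the probability that a uniformly random `μ × K` matrix
over a field with `q` elements has rank `i`. -/
noncomputable def Prank (q μ K i : ℕ) : ℝ :=
  (q : ℝ) ^ (-(((μ : ℤ) - (i : ℤ)) * ((K : ℤ) - (i : ℤ)))) *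
    ∏ l ∈ Finset.range i,
      ((1 - (q : ℝ) ^ ((l : ℤ) - (μ : ℤ))) * (1 - (q : ℝ) ^ ((l : ℤ) - (K : ℤ))) /
        (1 - (q : ℝ) ^ ((l : ℤ) - (i : ℤ))))

/-- The rank of the submatrix of `M` formed by the rows indexed by `U`. -/
noncomputable def rowRank {N K : ℕ} {F : Type*} [Field F]
    (M : Matrix (Fin N) (Fin K) F) (U : Finset (Fin N)) : ℕ :=
  (Matrix.of fun (i : ↥U) (j : Fin K) => M i.val j).rank

/-- The probability (in the non-systematic RLNC model with a single user with per-row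
erasure probability `ε`) that the user's coding matrix — the submatrix of a uniformly random
`G : Matrix (Fin N) (Fin K) F` formed by the received rows — has rank `K`. -/
noncomputable def nonSysProb1 (N K : ℕ) (F : Type*) [Field F] [Fintype F] (ε : ℝ) : ℝ :=
  ∑ G : Matrix (Fin N) (Fin K) F, ∑ R : Fin N → Bool,
    ((Fintype.card F : ℝ) ^ (N * K))⁻¹ *
      (∏ k, if R k then (1 - ε) else ε) *
      (if rowRank G (Finset.univ.filter fun k => R k = true) = K then 1 else 0)

/-! ### Auxiliary lemmas -/

/-- A matrix has rank equal to its number of columns iff its columns are linearly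
independent. -/
lemma rank_eq_iff_li {μ : Type*} [Fintype μ] {F : Type*} [Field F] {K : ℕ}
    (A : Matrix μ (Fin K) F) :
    A.rank = K ↔ LinearIndependent F (fun (j : Fin K) (i : μ) => A i j) := by
  rw [Matrix.rank_eq_finrank_span_cols,
    linearIndependent_iff_card_eq_finrank_span (b := fun (j : Fin K) (i : μ) => A i j),
    Fintype.card_fin, Set.finrank]
  exact eq_comm

/-- Counting matrices of full column rank. -/
lemma count_fullrank (F : Type*) [Field F] [Fintype F] (μ : Type*) [Fintype μ] [DecidableEq μ] (K : ℕ)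
    (hK : K ≤ Fintype.card μ) :
    (∑ A : Matrix μ (Fin K) F, if A.rank = K then (1 : ℝ) else 0)
      = ((∏ i ∈ Finset.range K,
          ((Fintype.card F) ^ (Fintype.card μ) - (Fintype.card F) ^ i) : ℕ) : ℝ) := by
  classical
  have e1 : {A : Matrix μ (Fin K) F // A.rank = K}
      ≃ {s : Fin K → (μ → F) // LinearIndependent F s} :=
    { toFun := fun A => ⟨fun j i => A.1 i j, (rank_eq_iff_li A.1).mp A.2⟩
      invFun := fun s => ⟨Matrix.of fun i j => s.1 j i, (rank_eq_iff_li _).mpr s.2⟩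
      left_inv := fun A => rfl
      right_inv := fun s => rfl }
  have h2 := card_linearIndependent (K := F) (V := μ → F) (k := K)
    (by rw [Module.finrank_fintype_fun_eq_card]; exact hK)
  rw [Nat.card_eq_fintype_card] at h2
  rw [Finset.sum_boole]
  congr 1
  rw [← Fintype.card_subtype, Fintype.card_congr e1, h2,
    Module.finrank_fintype_fun_eq_card]
  exact Fin.prod_univ_eq_prod_range
    (fun i => (Fintype.card F) ^ (Fintype.card μ) - (Fintype.card F) ^ i) K

/-- Splitting a matrix into the rows inside `U` and outside `U`. -/
noncomputable def matSplit {N K : ℕ} (F : Type*) [Field F] (U : Finset (Fin N)) :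
    Matrix (Fin N) (Fin K) F ≃
      Matrix ↥U (Fin K) F × Matrix {x : Fin N // x ∉ U} (Fin K) F where
  toFun G := (Matrix.of fun i j => G i.1 j, Matrix.of fun i j => G i.1 j)
  invFun p := Matrix.of fun n j => if h : n ∈ U then p.1 ⟨n, h⟩ j else p.2 ⟨n, h⟩ j
  left_inv G := by
    funext n j
    simp only [Matrix.of_apply]
    split <;> rfl
  right_inv p := by
    obtain ⟨A, B⟩ := p
    simp only [Prod.mk.injEq]
    constructor
    · funext i j
      simp only [Matrix.of_apply]
      exact dif_pos i.2
    · funext i j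
      simp only [Matrix.of_apply]
      exact dif_neg i.2

lemma rowRank_matSplit {N K : ℕ} {F : Type*} [Field F] (U : Finset (Fin N))
    (G : Matrix (Fin N) (Fin K) F) :
    rowRank G U = ((matSplit F U G).1).rank := rfl

lemma sum_indicator_eq {N K : ℕ} (F : Type*) [Field F] [Fintype F] (U : Finset (Fin N)) :
    (∑ G : Matrix (Fin N) (Fin K) F, (if rowRank G U = K then (1 : ℝ) else 0))
      = (∑ A : Matrix ↥U (Fin K) F, if A.rank = K then (1 : ℝ) else 0)
          * ((Fintype.card F : ℝ) ^ K) ^ (N - U.card) := by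
  classical
  have h1 : (∑ G : Matrix (Fin N) (Fin K) F, (if rowRank G U = K then (1 : ℝ) else 0))
      = ∑ p : Matrix ↥U (Fin K) F × Matrix {x : Fin N // x ∉ U} (Fin K) F,
          (if p.1.rank = K then (1 : ℝ) else 0) := by
    refine Fintype.sum_equiv (matSplit F U) _ _ fun G => ?_
    rw [rowRank_matSplit]
  rw [h1, Fintype.sum_prod_type]
  have h3 : ∀ A : Matrix ↥U (Fin K) F,
      (∑ _B : Matrix {x : Fin N // x ∉ U} (Fin K) F, (if A.rank = K then (1 : ℝ) else 0))
        = (if A.rank = K then (1 : ℝ) else 0)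
            * (Fintype.card (Matrix {x : Fin N // x ∉ U} (Fin K) F) : ℝ) := by
    intro A
    rw [Finset.sum_const, Finset.card_univ, nsmul_eq_mul]
    ring
  rw [Finset.sum_congr rfl fun A _ => h3 A, ← Finset.sum_mul]
  have hcard : Fintype.card (Matrix {x : Fin N // x ∉ U} (Fin K) F)
      = (Fintype.card F ^ K) ^ (N - U.card) := by
    rw [show Fintype.card (Matrix {x : Fin N // x ∉ U} (Fin K) F)
        = Fintype.card ({x : Fin N // x ∉ U} → Fin K → F) from rfl,
      Fintype.card_fun, Fintype.card_fun, Fintype.card_fin]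
    congr 1
    rw [Fintype.card_subtype_compl, Fintype.card_fin, Fintype.card_coe]
  rw [hcard]
  push_cast
  ring

lemma pfull_zero (q m K : ℕ) (hm : m < K) : Pfull q m K = 0 := by
  refine Finset.prod_eq_zero (Finset.mem_range.mpr hm) ?_
  simp

/-- The key per-subset computation. -/
lemma key_lemma (q N K : ℕ) (hq : 2 ≤ q) (F : Type*) [Field F] [Fintype F]
    (hF : Fintype.card F = q) (U : Finset (Fin N)) :
    ((q : ℝ) ^ (N * K))⁻¹ *
        (∑ G : Matrix (Fin N) (Fin K) F, (if rowRank G U = K then (1 : ℝ) else 0))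
      = Pfull q U.card K := by
  classical
  have hq0 : (0 : ℝ) < q := by positivity
  have hq0' : (q : ℝ) ≠ 0 := ne_of_gt hq0
  have hmN : U.card ≤ N := by simpa using Finset.card_le_univ U
  by_cases hKm : K ≤ U.card
  · -- full-rank case
    have hcardU : Fintype.card ↥U = U.card := Fintype.card_coe U
    have hcount := count_fullrank F ↥U K (by rw [hcardU]; exact hKm)
    rw [hcardU, hF] at hcount
    rw [sum_indicator_eq, hcount, hF]
    have hterm : ∀ i ∈ Finset.range K,
        ((q ^ U.card - q ^ i : ℕ) : ℝ)
          = (q : ℝ) ^ U.card * (1 - (q : ℝ) ^ ((i : ℤ) - (U.card : ℤ))) := by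
      intro i hi
      have hi' : i ≤ U.card := le_trans (le_of_lt (Finset.mem_range.mp hi)) hKm
      have hle : q ^ i ≤ q ^ U.card :=
        Nat.pow_le_pow_right (le_trans (by norm_num) hq) hi'
      rw [Nat.cast_sub hle]
      have hz : (q : ℝ) ^ ((i : ℤ) - (U.card : ℤ)) = (q : ℝ) ^ i / (q : ℝ) ^ U.card := by
        rw [zpow_sub₀ hq0', zpow_natCast, zpow_natCast]
      rw [hz]
      push_cast
      field_simp
    rw [Nat.cast_prod, Finset.prod_congr rfl hterm, Finset.prod_mul_distrib,
      Finset.prod_const, Finset.card_range]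
    have hNK : N * K = U.card * K + (N - U.card) * K := by
      rw [← Nat.add_mul, Nat.add_sub_cancel' hmN]
    rw [hNK, pow_add, ← pow_mul, ← pow_mul, Pfull]
    have h1 : ((q : ℝ) ^ (U.card * K)) ≠ 0 := by positivity
    have h2 : ((q : ℝ) ^ ((N - U.card) * K)) ≠ 0 := by positivity
    rw [mul_inv]
    field_simp
    ring
  · -- rank-deficient case: both sides are zero
    push_neg at hKm
    have hzero : ∀ G : Matrix (Fin N) (Fin K) F,
        (if rowRank G U = K then (1 : ℝ) else 0) = 0 := by
      intro G
      have hle : rowRank G U ≤ U.card := by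
        rw [rowRank]
        calc (Matrix.of fun (i : ↥U) (j : Fin K) => G i.val j).rank
            ≤ Fintype.card ↥U := Matrix.rank_le_card_height _
          _ = U.card := Fintype.card_coe U
      have hne : rowRank G U ≠ K := by omega
      simp [hne]
    rw [Finset.sum_congr rfl fun G _ => hzero G, Finset.sum_const,
      pfull_zero q U.card K hKm]
    simp

/-- Bijection between indicator functions and finsets. -/
noncomputable def boolEquiv (N : ℕ) : (Fin N → Bool) ≃ Finset (Fin N) where
  toFun R := Finset.univ.filter fun k => R k = true
  invFun U := fun k => decide (k ∈ U)
  left_inv R := by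
    funext k
    by_cases h : R k = true <;> simp [h]
  right_inv U := by
    ext k
    simp

/-- exact point-to-point probability for non-systematic RLNC, equation (2):
the single-user success probability equals `Σ_{m=K}^{N} C(N,m) (1-ε)^m ε^{N-m} P(m,K)`. -/
theorem stmt12 (q N K : ℕ) (hq : 2 ≤ q) (hK : 0 < K) (hKN : K ≤ N)
    (F : Type*) [Field F] [Fintype F] (hF : Fintype.card F = q)
    (ε : ℝ) (hε : ε ∈ Set.Icc (0 : ℝ) 1) :
    nonSysProb1 N K F ε
      = ∑ m ∈ Finset.Icc K N,
          (N.choose m : ℝ) * (1 - ε) ^ m * ε ^ (N - m) * Pfull q m K := by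
  classical
  have step1 : nonSysProb1 N K F ε
      = ∑ R : Fin N → Bool,
          (1 - ε) ^ ((Finset.univ.filter fun k => R k = true).card)
            * ε ^ (N - (Finset.univ.filter fun k => R k = true).card)
            * Pfull q ((Finset.univ.filter fun k => R k = true).card) K := by
    rw [nonSysProb1, Finset.sum_comm]
    refine Finset.sum_congr rfl fun R _ => ?_
    have hprod : (∏ k, if R k then (1 - ε) else ε)
        = (1 - ε) ^ ((Finset.univ.filter fun k => R k = true).card)
            * ε ^ (N - (Finset.univ.filter fun k => R k = true).card) := by
      rw [Finset.prod_ite (fun _ => (1 - ε)) (fun _ => ε), Finset.prod_const,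
        Finset.prod_const]
      congr 2
      have hc := Finset.card_filter_add_card_filter_not
        (s := (Finset.univ : Finset (Fin N))) (p := fun k => R k = true)
      simp only [Finset.card_univ, Fintype.card_fin] at hc
      omega
    have h2 : (∑ G : Matrix (Fin N) (Fin K) F,
          ((Fintype.card F : ℝ) ^ (N * K))⁻¹ * (∏ k, if R k then (1 - ε) else ε) *
            (if rowRank G (Finset.univ.filter fun k => R k = true) = K then 1 else 0))
        = (∏ k, if R k then (1 - ε) else ε) *
            (((q : ℝ) ^ (N * K))⁻¹ *
              ∑ G : Matrix (Fin N) (Fin K) F,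
                (if rowRank G (Finset.univ.filter fun k => R k = true) = K
                  then (1 : ℝ) else 0)) := by
      simp only [hF, mul_assoc]
      rw [← Finset.mul_sum, ← Finset.mul_sum]
      ring
    rw [h2, key_lemma q N K hq F hF, hprod]
  rw [step1]
  have step2 : (∑ R : Fin N → Bool,
          (1 - ε) ^ ((Finset.univ.filter fun k => R k = true).card)
            * ε ^ (N - (Finset.univ.filter fun k => R k = true).card)
            * Pfull q ((Finset.univ.filter fun k => R k = true).card) K)
      = ∑ U : Finset (Fin N),
          (1 - ε) ^ U.card * ε ^ (N - U.card) * Pfull q U.card K := by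
    exact Fintype.sum_equiv (boolEquiv N) _ _ fun R => rfl
  rw [step2]
  have step3 : (∑ U : Finset (Fin N),
          (1 - ε) ^ U.card * ε ^ (N - U.card) * Pfull q U.card K)
      = ∑ m ∈ Finset.range (N + 1),
          (N.choose m : ℝ) * ((1 - ε) ^ m * ε ^ (N - m) * Pfull q m K) := by
    have hpow : (∑ U : Finset (Fin N),
          (1 - ε) ^ U.card * ε ^ (N - U.card) * Pfull q U.card K)
        = ∑ U ∈ (Finset.univ : Finset (Fin N)).powerset,
          (1 - ε) ^ U.card * ε ^ (N - U.card) * Pfull q U.card K := by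
      rw [Finset.powerset_univ]
    rw [hpow, Finset.sum_powerset, Finset.card_univ, Fintype.card_fin]
    refine Finset.sum_congr rfl fun m _ => ?_
    have hconst : ∀ U ∈ Finset.powersetCard m (Finset.univ : Finset (Fin N)),
        (1 - ε) ^ U.card * ε ^ (N - U.card) * Pfull q U.card K
          = (1 - ε) ^ m * ε ^ (N - m) * Pfull q m K := by
      intro U hU
      rw [(Finset.mem_powersetCard.mp hU).2]
    rw [Finset.sum_congr rfl hconst, Finset.sum_const, Finset.card_powersetCard,
      Finset.card_univ, Fintype.card_fin, nsmul_eq_mul]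
  rw [step3]
  have hring : ∀ m, (N.choose m : ℝ) * (1 - ε) ^ m * ε ^ (N - m) * Pfull q m K
      = (N.choose m : ℝ) * ((1 - ε) ^ m * ε ^ (N - m) * Pfull q m K) := fun m => by ring
  simp only [hring]
  refine (Finset.sum_subset ?_ ?_).symm
  · intro m hm
    rw [Finset.mem_Icc] at hm
    rw [Finset.mem_range]
    omega
  · intro m hm hnot
    rw [Finset.mem_range] at hm
    rw [Finset.mem_Icc] at hnot
    have hmK : m < K := by omega
    rw [pfull_zero q m K hmK]
    ring
end

section
/- (Exact point-to-point probability for systematic RLNC, equation (4)) Let N ≥ K ≥ 1 be integers and ε ∈ [0,1]. In the systematic RLNC broadcast model with a single user (L = 1) whose per-row erasure probability is ε, the probability that the user's coding matrix has rank K equals exactly Σ_{m=K}^{N} (1−ε)^m ε^{N−m} Σ_{h=max(0,m−N+K)}^{min(K,m)} C(K,h) C(N−K, m−h) P(m−h, K−h), where C(a,b) is the binomial coefficient. -/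
open scoped Classical

/-- The systematic coding matrix: its first `K` rows form the `K × K` identity matrix and
its remaining `N - K` rows are given by `D`. -/
def sysMatrix (N K : ℕ) {F : Type*} [Field F]
    (D : Matrix (Fin (N - K)) (Fin K) F) : Matrix (Fin N) (Fin K) F :=
  Matrix.of fun k j =>
    if _h : (k : ℕ) < K then (if (k : ℕ) = (j : ℕ) then 1 else 0)
    else D ⟨(k : ℕ) - K, by have hk := k.isLt; omega⟩ j

/-- The probability (in the systematic RLNC model with a single user with per-row erasure
probability `ε`) that the user's coding matrix — the submatrix of `sysMatrix N K D`, where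
`D` is uniformly random, formed by the received rows — has rank `K`. -/
noncomputable def sysProb1 (N K : ℕ) (F : Type*) [Field F] [Fintype F] (ε : ℝ) : ℝ :=
  ∑ D : Matrix (Fin (N - K)) (Fin K) F, ∑ R : Fin N → Bool,
    ((Fintype.card F : ℝ) ^ ((N - K) * K))⁻¹ *
      (∏ k, if R k then (1 - ε) else ε) *
      (if rowRank (sysMatrix N K D) (Finset.univ.filter fun k => R k = true) = K
        then 1 else 0)

/-! A reception pattern consists of a set `S` of received systematic rows and a set `T` of
received coded rows. The identity rows indexed by `S` span the coordinates in `S`, so the received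
rows span `F^K` iff the rows of `D` indexed by `T`, restricted to the columns outside `S`, span
`F^(K - |S|)`, i.e. iff the `|T| × (K - |S|)` submatrix of `D` has full column rank. That
submatrix is uniformly distributed, so the conditional success probability is `P(|T|, K - |S|)`.
The erasure weight of a pattern only depends on `|S| + |T|`; grouping the patterns by
`m = |S| + |T|` and `h = |S|` gives the formula, the patterns with `m < K` contributing nothing
because `P(m - h, K - h) = 0` for `m < K`. -/

open Finset Matrix

theorem Pfull_eq_zero_of_lt {q m K : ℕ} (h : m < K) : Pfull q m K = 0 :=
  prod_eq_zero (mem_range.mpr h) (by simp)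

theorem prod_range_pow_sub_pow {q : ℕ} (hq : q ≠ 0) (m K : ℕ) :
    ∏ i ∈ range K, ((q : ℝ) ^ m - (q : ℝ) ^ i) = Pfull q m K * (q : ℝ) ^ (m * K) := by
  have hq' : (q : ℝ) ≠ 0 := Nat.cast_ne_zero.mpr hq
  rw [Pfull, pow_mul, ← card_range K, ← prod_const, card_range, ← prod_mul_distrib]
  refine prod_congr rfl fun i _ => ?_
  rw [zpow_sub₀ hq', zpow_natCast, zpow_natCast, sub_mul, one_mul,
    div_mul_cancel₀ _ (pow_ne_zero _ hq')]

section Counting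

variable {α M : Type*} [Fintype α]

theorem Fintype.sum_bool_fun_eq_sum_finset [DecidableEq α] [AddCommMonoid M]
    (f : Finset α → M) : ∑ R : α → Bool, f {a | R a} = ∑ U, f U :=
  Fintype.sum_equiv ⟨fun R => ({a | R a} : Finset α), fun U a => decide (a ∈ U),
    fun R => by ext; simp, fun U => by ext; simp⟩ (fun R => f {a | R a}) f fun _ => rfl

theorem Fintype.prod_ite_bool [CommMonoid M] (R : α → Bool) (a b : M) :
    ∏ x, (if R x then a else b) = a ^ #{x | R x} * b ^ (Fintype.card α - #{x | R x}) := by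
  rw [prod_ite, prod_const, prod_const, filter_not, card_sdiff_of_subset (filter_subset _ _),
    card_univ]

theorem Fintype.sum_finset_apply_card [AddCommMonoid M] (f : ℕ → M) :
    ∑ s : Finset α, f #s =
      ∑ k ∈ range (Fintype.card α + 1), (Fintype.card α).choose k • f k := by
  rw [← powerset_univ, sum_powerset_apply_card, card_univ]

end Counting

theorem sum_range_sum_range_eq_sum_Icc_sum_Icc {M : Type*} [AddCommMonoid M] {N K : ℕ}
    (hKN : K ≤ N) (f : ℕ → ℕ → M) (hf : ∀ h t, h + t < K → f h t = 0) :
    ∑ h ∈ range (K + 1), ∑ t ∈ range (N - K + 1), f h t =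
      ∑ m ∈ Icc K N, ∑ h ∈ Icc (m + K - N) (min K m), f h (m - h) := by
  rw [← sum_product', sum_sigma', ← sum_filter_of_ne (p := fun p => K ≤ p.1 + p.2)
    fun p _ hp => by_contra fun hK => hp (hf _ _ (by omega))]
  refine sum_nbij' (fun p => ⟨p.1 + p.2, p.1⟩) (fun x => (x.2, x.1 - x.2)) ?_ ?_ ?_ ?_ ?_
  · simp only [mem_filter, mem_product, mem_range, mem_sigma, mem_Icc, le_min_iff]
    omega
  · simp only [mem_filter, mem_product, mem_range, mem_sigma, mem_Icc, le_min_iff]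
    omega
  · intro p _
    simp
  · rintro ⟨m, h⟩ hx
    simp only [mem_sigma, mem_Icc, le_min_iff] at hx
    simp only [Sigma.mk.injEq]
    exact ⟨by omega, heq_of_eq rfl⟩
  · intro p _
    simp

section FullRank

variable {F m n : Type*} [Field F] [Fintype n]

theorem Matrix.rank_eq_card_iff_linearIndependent_col (M : Matrix m n F) :
    M.rank = Fintype.card n ↔ LinearIndependent F M.col := by
  rw [rank_eq_finrank_span_cols, linearIndependent_iff_card_eq_finrank_span, Set.finrank, eq_comm]

theorem Matrix.rank_eq_card_iff_span_row_eq_top [Finite m] (M : Matrix m n F) :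
    M.rank = Fintype.card n ↔ Submodule.span F (Set.range M.row) = ⊤ := by
  rw [rank_eq_finrank_span_row, ← Module.finrank_fintype_fun_eq_card F]
  exact ⟨Submodule.eq_top_of_finrank_eq, fun h => by rw [h, finrank_top]⟩

theorem Matrix.card_rank_eq_card [Fintype m] [Fintype F] :
    (Nat.card {M : Matrix m n F // M.rank = Fintype.card n} : ℝ) =
      Pfull (Fintype.card F) (Fintype.card m) (Fintype.card n) *
        (Fintype.card F : ℝ) ^ (Fintype.card m * Fintype.card n) := by
  rcases lt_or_ge (Fintype.card m) (Fintype.card n) with hmn | hnm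
  · have : IsEmpty {M : Matrix m n F // M.rank = Fintype.card n} :=
      ⟨fun M => hmn.not_ge (M.2 ▸ M.1.rank_le_card_height)⟩
    simp [Pfull_eq_zero_of_lt hmn]
  have cols : {M : Matrix m n F // M.rank = Fintype.card n} ≃
      {s : Fin (Fintype.card n) → m → F // LinearIndependent F s} :=
    (transposeAddEquiv m n F).toEquiv.subtypeEquiv rank_eq_card_iff_linearIndependent_col |>.trans
      ((Equiv.arrowCongr (Fintype.equivFin n) (Equiv.refl _)).subtypeEquiv
        fun s => (linearIndependent_equiv (Fintype.equivFin n).symm).symm)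
  have hq : Fintype.card F ≠ 0 := Fintype.card_ne_zero
  rw [Nat.card_congr cols, card_linearIndependent (by rwa [Module.finrank_fintype_fun_eq_card]),
    Module.finrank_fintype_fun_eq_card, Nat.cast_prod, ← prod_range_pow_sub_pow hq,
    ← Fin.prod_univ_eq_prod_range]
  refine prod_congr rfl fun i _ => ?_
  rw [Nat.cast_sub (Nat.pow_le_pow_right (Nat.pos_of_ne_zero hq) (i.2.le.trans hnm)),
    Nat.cast_pow, Nat.cast_pow]

end FullRank

theorem Matrix.card_submatrix_subtype_val {F m n : Type*} [Fintype F] [Fintype m] [Fintype n]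
    [DecidableEq m] [DecidableEq n] (s : Finset m) (t : Finset n) (P : Matrix s t F → Prop) :
    Nat.card {D : Matrix m n F // P (D.submatrix Subtype.val Subtype.val)} =
      Nat.card {M : Matrix s t F // P M} *
        Fintype.card F ^ (Fintype.card m * Fintype.card n - #s * #t) := by
  let p : m × n → Prop := fun x => x.1 ∈ s ∧ x.2 ∈ t
  let e : Matrix m n F ≃ Matrix s t F × ({x // ¬ p x} → F) :=
    (Equiv.curry m n F).symm.trans <| (Equiv.piEquivPiSubtypeProd p fun _ => F).trans <|
      Equiv.prodCongr ((Equiv.arrowCongr Equiv.subtypeProdEquivProd (Equiv.refl F)).trans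
        (Equiv.curry s t F)) (Equiv.refl _)
  have e' : {D : Matrix m n F // P (D.submatrix Subtype.val Subtype.val)} ≃
      {M : Matrix s t F // P M} × ({x // ¬ p x} → F) :=
    (e.subtypeEquiv (q := fun x => P x.1) fun D => Iff.rfl).trans
      Equiv.prodSubtypeFstEquivSubtypeProd
  have hp : Fintype.card {x // p x} = #s * #t := by
    rw [Fintype.card_congr Equiv.subtypeProdEquivProd, Fintype.card_prod, Fintype.card_coe,
      Fintype.card_coe]
  rw [Nat.card_congr e', Nat.card_prod, Nat.card_eq_fintype_card (α := _ → F), Fintype.card_fun,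
    Fintype.card_subtype_compl, hp, Fintype.card_prod]

section Span

variable {F n : Type*} [Field F] [DecidableEq n]

theorem span_image_single_union_eq_top_iff [Fintype n] (S : Finset n) (W : Set (n → F)) :
    Submodule.span F ((fun j => Pi.single j (1 : F)) '' S ∪ W) = ⊤ ↔
      Submodule.span F ((fun (w : n → F) (j : ↥Sᶜ) => w j) '' W) = ⊤ := by
  set E := (fun j => Pi.single j (1 : F)) '' (S : Set n)
  let π := LinearMap.funLeft F F (Subtype.val : ↥Sᶜ → n)
  have hπ : LinearMap.range π = ⊤ := LinearMap.range_eq_top.mpr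
    (LinearMap.funLeft_surjective_of_injective F F _ Subtype.val_injective)
  have hE : Submodule.span F (π '' E) = ⊥ := by
    rw [Submodule.span_eq_bot]
    rintro _ ⟨_, ⟨j, hj, rfl⟩, rfl⟩
    funext c
    exact Pi.single_eq_of_ne (fun h => mem_compl.mp (h ▸ c.2) hj) _
  have hker : LinearMap.ker π ≤ Submodule.span F E := by
    intro x hx
    rw [pi_eq_sum_univ' x]
    refine Submodule.sum_mem _ fun j _ => ?_
    by_cases hj : j ∈ S
    · exact Submodule.smul_mem _ _ (Submodule.subset_span ⟨j, hj, rfl⟩)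
    · rw [show x j = 0 from congrFun hx ⟨j, mem_compl.mpr hj⟩, zero_smul]
      exact Submodule.zero_mem _
  have hmap : (Submodule.span F (E ∪ W)).map π = Submodule.span F (π '' W) := by
    rw [Submodule.map_span, Set.image_union, Submodule.span_union, hE, bot_sup_eq]
  change _ ↔ Submodule.span F (π '' W) = ⊤
  rw [← hmap, LinearMap.map_eq_top_iff hπ,
    sup_eq_left.mpr (hker.trans (Submodule.span_mono Set.subset_union_left))]

variable {m : Type*}

theorem Matrix.image_row_fromRows_one (D : Matrix m n F) (U : Finset (n ⊕ m)) :
    (fromRows (1 : Matrix n n F) D).row '' U =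
      (fun j => Pi.single j (1 : F)) '' U.toLeft ∪ D.row '' U.toRight := by
  have hrow (j : n) : (fromRows (1 : Matrix n n F) D).row (.inl j) = Pi.single j 1 :=
    funext fun _ => one_eq_pi_single
  ext v
  simp only [Set.mem_image, Set.mem_union, Finset.mem_coe, Sum.exists, mem_toLeft, mem_toRight,
    hrow]
  rfl

theorem Matrix.span_image_row_fromRows_one_eq_top_iff [Fintype m] [Fintype n]
    (D : Matrix m n F) (U : Finset (n ⊕ m)) :
    Submodule.span F ((fromRows (1 : Matrix n n F) D).row '' U) = ⊤ ↔
      (D.submatrix (Subtype.val : U.toRight → m) (Subtype.val : ↥U.toLeftᶜ → n)).rank =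
        Fintype.card ↥U.toLeftᶜ := by
  rw [image_row_fromRows_one, span_image_single_union_eq_top_iff,
    rank_eq_card_iff_span_row_eq_top, Set.image_image, Set.image_eq_range]
  rfl

theorem Matrix.card_span_image_row_fromRows_one_eq_top [Fintype F] [Fintype m] [Fintype n]
    [DecidableEq m] (U : Finset (n ⊕ m)) :
    (Nat.card {D : Matrix m n F //
        Submodule.span F ((fromRows (1 : Matrix n n F) D).row '' U) = ⊤} : ℝ) =
      Pfull (Fintype.card F) #U.toRight (Fintype.card n - #U.toLeft) *
        (Fintype.card F : ℝ) ^ (Fintype.card m * Fintype.card n) := by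
  have hdim : #U.toRight * #U.toLeftᶜ ≤ Fintype.card m * Fintype.card n :=
    Nat.mul_le_mul (card_le_univ _) (card_le_univ _)
  rw [Nat.card_congr (Equiv.subtypeEquivRight fun D =>
      span_image_row_fromRows_one_eq_top_iff D U),
    card_submatrix_subtype_val U.toRight U.toLeftᶜ
      (fun M => M.rank = Fintype.card ↥U.toLeftᶜ),
    Nat.cast_mul, card_rank_eq_card, Nat.cast_pow, mul_assoc, ← pow_add, Fintype.card_coe,
    Fintype.card_coe, Nat.add_sub_cancel' hdim, card_compl]

end Span

section Systematic

variable {F : Type*} [Field F] {N K : ℕ}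

def sysRowEquiv (hKN : K ≤ N) : Fin K ⊕ Fin (N - K) ≃ Fin N :=
  finSumFinEquiv.trans (finCongr (Nat.add_sub_cancel' hKN))

theorem sysMatrix_apply_sysRowEquiv (hKN : K ≤ N) (D : Matrix (Fin (N - K)) (Fin K) F)
    (x : Fin K ⊕ Fin (N - K)) :
    sysMatrix N K D (sysRowEquiv hKN x) = fromRows 1 D x := by
  funext j
  rcases x with i | i
  · simp [sysMatrix, sysRowEquiv, one_apply, Fin.ext_iff, eq_comm]
  · simp [sysMatrix, sysRowEquiv]

theorem rowRank_eq_iff_span_image_row_eq_top (M : Matrix (Fin N) (Fin K) F)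
    (U : Finset (Fin N)) : rowRank M U = K ↔ Submodule.span F (M.row '' U) = ⊤ := by
  have h := rank_eq_card_iff_span_row_eq_top (Matrix.of fun (i : ↥U) j => M i j)
  rw [Fintype.card_fin] at h
  rw [rowRank, h, Set.image_eq_range]
  rfl

theorem rowRank_sysMatrix_map_sysRowEquiv_eq_iff (hKN : K ≤ N)
    (D : Matrix (Fin (N - K)) (Fin K) F) (V : Finset (Fin K ⊕ Fin (N - K))) :
    rowRank (sysMatrix N K D) (V.map (sysRowEquiv hKN).toEmbedding) = K ↔
      Submodule.span F ((fromRows (1 : Matrix (Fin K) (Fin K) F) D).row '' V) = ⊤ := by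
  rw [rowRank_eq_iff_span_image_row_eq_top, coe_map, Set.image_image]
  simp only [Equiv.coe_toEmbedding, row, sysMatrix_apply_sysRowEquiv]

theorem card_rowRank_sysMatrix_map_sysRowEquiv [Fintype F] (hKN : K ≤ N)
    (V : Finset (Fin K ⊕ Fin (N - K))) :
    (Nat.card {D : Matrix (Fin (N - K)) (Fin K) F //
        rowRank (sysMatrix N K D) (V.map (sysRowEquiv hKN).toEmbedding) = K} : ℝ) =
      Pfull (Fintype.card F) #V.toRight (K - #V.toLeft) *
        (Fintype.card F : ℝ) ^ ((N - K) * K) := by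
  rw [Nat.card_congr (Equiv.subtypeEquivRight fun D =>
      rowRank_sysMatrix_map_sysRowEquiv_eq_iff hKN D V),
    card_span_image_row_fromRows_one_eq_top, Fintype.card_fin, Fintype.card_fin]

theorem sysProb1_eq_sum_finset_sum_finset [Fintype F] (hKN : K ≤ N) (ε : ℝ) :
    sysProb1 N K F ε = ∑ S : Finset (Fin K), ∑ T : Finset (Fin (N - K)),
      (1 - ε) ^ (#S + #T) * ε ^ (N - (#S + #T)) * Pfull (Fintype.card F) #T (K - #S) := by
  have hq : (Fintype.card F : ℝ) ^ ((N - K) * K) ≠ 0 :=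
    pow_ne_zero _ (Nat.cast_ne_zero.mpr Fintype.card_ne_zero)
  have hU : sysProb1 N K F ε = ∑ U : Finset (Fin N), (1 - ε) ^ #U * ε ^ (N - #U) *
      (Nat.card {D : Matrix (Fin (N - K)) (Fin K) F // rowRank (sysMatrix N K D) U = K} /
        (Fintype.card F : ℝ) ^ ((N - K) * K)) := by
    rw [sysProb1, sum_comm, ← Fintype.sum_bool_fun_eq_sum_finset]
    refine Fintype.sum_congr _ _ fun R => ?_
    rw [← mul_sum, sum_boole, Fintype.prod_ite_bool, Fintype.card_fin, Nat.card_eq_fintype_card,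
      Fintype.card_subtype, div_eq_inv_mul]
    ring
  rw [hU, ← (Equiv.finsetCongr (sysRowEquiv hKN)).sum_comp,
    ← Finset.sumEquiv.symm.toEquiv.sum_comp, Fintype.sum_prod_type]
  refine sum_congr rfl fun S _ => sum_congr rfl fun T _ => ?_
  rw [Equiv.finsetCongr_apply, card_rowRank_sysMatrix_map_sysRowEquiv, card_map,
    mul_div_cancel_right₀ _ hq, OrderIso.coe_toEquiv, sumEquiv_symm_apply, card_disjSum,
    toLeft_disjSum, toRight_disjSum]

end Systematic

theorem stmt13_general (q N K : ℕ) (hKN : K ≤ N)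
    (F : Type*) [Field F] [Fintype F] (hF : Fintype.card F = q)
    (ε : ℝ) :
    sysProb1 N K F ε
      = ∑ m ∈ Finset.Icc K N, (1 - ε) ^ m * ε ^ (N - m) *
          ∑ h ∈ Finset.Icc (m + K - N) (min K m),
            (K.choose h : ℝ) * ((N - K).choose (m - h) : ℝ) * Pfull q (m - h) (K - h) := by
  subst hF
  set G : ℕ → ℕ → ℝ := fun h t =>
    (1 - ε) ^ (h + t) * ε ^ (N - (h + t)) * Pfull (Fintype.card F) t (K - h)
  rw [sysProb1_eq_sum_finset_sum_finset hKN,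
    Fintype.sum_finset_apply_card (fun h => ∑ T : Finset (Fin (N - K)), G h #T)]
  simp_rw [Fintype.sum_finset_apply_card (G _), Fintype.card_fin, smul_sum, nsmul_eq_mul]
  rw [sum_range_sum_range_eq_sum_Icc_sum_Icc hKN _
    fun h t ht => by simp only [G, Pfull_eq_zero_of_lt (show t < K - h by omega), mul_zero]]
  refine sum_congr rfl fun m _ => ?_
  rw [mul_sum]
  refine sum_congr rfl fun h hh => ?_
  have hm : h + (m - h) = m := Nat.add_sub_cancel' (by simp at hh; omega)
  simp only [G, hm]
  ring

/-- exact point-to-point probability for systematic RLNC, equation (4):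
the single-user success probability equals
`Σ_{m=K}^{N} (1-ε)^m ε^{N-m} Σ_{h=max(0,m-N+K)}^{min(K,m)} C(K,h) C(N-K,m-h) P(m-h,K-h)`. -/
theorem stmt13 (q N K : ℕ) (hq : 2 ≤ q) (hK : 0 < K) (hKN : K ≤ N)
    (F : Type*) [Field F] [Fintype F] (hF : Fintype.card F = q)
    (ε : ℝ) (hε : ε ∈ Set.Icc (0 : ℝ) 1) :
    sysProb1 N K F ε
      = ∑ m ∈ Finset.Icc K N, (1 - ε) ^ m * ε ^ (N - m) *
          ∑ h ∈ Finset.Icc (m + K - N) (min K m),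
            (K.choose h : ℝ) * ((N - K).choose (m - h) : ℝ) * Pfull q (m - h) (K - h) :=
  stmt13_general q N K hKN F hF ε
end
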